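/- arXiv:1709.03129 — 7 statements merged into one kernel-verified Lean document; each statement's English description precedes it below -/
import Mathlib

section
/- For n ≥ 1, the n-fold convolution of the pmf p_0 = 1 - m/(1+r), p_k = m r^{k-1}/(1+r)^{k+1} (k ≥ 1) is given by p_k^{(n)} = (1 - m/(r+1))^n (r/(r+1))^k · Σ_{i=0}^{min(k,n)} C(n,i) C(k-1,i-1) (m/(r(r+1-m)))^i. -/
noncomputable def psi (m r s : ℝ) : ℝ := 1 - m * (1 - s) / (1 + r * (1 - s))

/-- `C(k-1, i-1)` with the convention `C(k-1,-1) = 1` if `k = 0` and `0` if `k ≥ 1`. -/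
noncomputable def cc (k i : ℕ) : ℝ :=
  if i = 0 then (if k = 0 then 1 else 0) else ((k - 1).choose (i - 1) : ℝ)

/-- The claimed formula for the n-fold convolution of the BerG(m,r) pmf. -/
noncomputable def convPmf (m r : ℝ) (n k : ℕ) : ℝ :=
  (1 - m / (r + 1)) ^ n * (r / (r + 1)) ^ k *
    ∑ i ∈ Finset.range (min k n + 1),
      (n.choose i : ℝ) * cc k i * (m / (r * (r + 1 - m))) ^ i

/-! With `u = r s / (r + 1)`, the negative binomial series gives `∑ₖ C(k-1, i-1) uᵏ = (u / (1 - u))ⁱ`.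
Summing the formula over `k` term by term therefore yields the binomial expansion of
`((1 - m / (r + 1)) (1 + m / (r (r + 1 - m)) · u / (1 - u)))ⁿ`, and the product inside is `ψ_{m,r}(s)`. -/

open Finset

section NegativeBinomialSeries

variable {𝕜 : Type*} [NormedField 𝕜]

theorem hasSum_multichoose_mul_geometric (i : ℕ) {u : 𝕜} (hu : ‖u‖ < 1) :
    HasSum (fun j : ℕ => (i.multichoose j : 𝕜) * u ^ j) (1 / (1 - u) ^ i) := by
  cases i with
  | zero =>
    convert hasSum_ite_eq 0 (1 : 𝕜) using 2 with j
    · cases j <;> simp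
    · simp
  | succ i =>
    convert hasSum_choose_mul_geometric_of_norm_lt_one i hu using 3 with j
    rw [Nat.multichoose_eq, show i + 1 + j - 1 = j + i by omega, Nat.choose_symm_add]

theorem hasSum_multichoose_sub_mul_geometric (i : ℕ) {u : 𝕜} (hu : ‖u‖ < 1) :
    HasSum (fun k : ℕ => if i ≤ k then (i.multichoose (k - i) : 𝕜) * u ^ k else 0)
      ((u / (1 - u)) ^ i) := by
  rw [← hasSum_nat_add_iff' i]
  have hfirst : ∑ k ∈ range i, (if i ≤ k then (i.multichoose (k - i) : 𝕜) * u ^ k else 0) = 0 :=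
    sum_eq_zero fun k hk => if_neg (by simpa using hk)
  rw [hfirst, sub_zero, div_pow, div_eq_mul_one_div]
  refine ((hasSum_multichoose_mul_geometric i hu).mul_left (u ^ i)).congr_fun fun j => ?_
  rw [if_pos (by omega), Nat.add_sub_cancel, pow_add]
  ring

end NegativeBinomialSeries

/- For `i ≥ 1`, `cc 0 i` is a junk value of truncated subtraction (`cc 0 1 = 1`), but `convPmf`
only evaluates `cc k i` for `i ≤ k`, where it agrees with the multichoose coefficient. -/
theorem cc_eq_multichoose {k i : ℕ} (h : i ≤ k) : cc k i = i.multichoose (k - i) := by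
  cases i with
  | zero => cases k <;> simp [cc]
  | succ i =>
    rw [cc, if_neg i.succ_ne_zero, Nat.multichoose_eq, Nat.add_sub_cancel,
      show i + 1 + (k - (i + 1)) - 1 = k - 1 by omega, show k - (i + 1) = k - 1 - i by omega,
      Nat.choose_symm (by omega)]

theorem convPmf_mul_pow (m r s : ℝ) (n k : ℕ) :
    convPmf m r n k * s ^ k = ∑ i ∈ range (n + 1),
      (1 - m / (r + 1)) ^ n * (n.choose i * (m / (r * (r + 1 - m))) ^ i) *
        (if i ≤ k then (i.multichoose (k - i) : ℝ) * (r / (r + 1) * s) ^ k else 0) := by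
  have hrange : range (min k n + 1) = (range (n + 1)).filter (· ≤ k) := by
    ext i; simp only [mem_range, mem_filter]; omega
  rw [convPmf, hrange, sum_filter, mul_sum, sum_mul]
  refine sum_congr rfl fun i _ => ?_
  split_ifs with hik
  · rw [cc_eq_multichoose hik, mul_pow]; ring
  · simp

theorem hasSum_convPmf_mul_pow (m r : ℝ) (n : ℕ) {s : ℝ} (hu : ‖r / (r + 1) * s‖ < 1) :
    HasSum (fun k => convPmf m r n k * s ^ k)
      (((1 - m / (r + 1)) *
        (1 + m / (r * (r + 1 - m)) * (r / (r + 1) * s / (1 - r / (r + 1) * s)))) ^ n) := by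
  simp only [convPmf_mul_pow]
  set x := m / (r * (r + 1 - m))
  set u := r / (r + 1) * s
  have hbinom : ((1 - m / (r + 1)) * (1 + x * (u / (1 - u)))) ^ n =
      ∑ i ∈ range (n + 1), (1 - m / (r + 1)) ^ n * (n.choose i * x ^ i) * (u / (1 - u)) ^ i := by
    rw [mul_pow, add_comm 1, add_pow, mul_sum]
    refine sum_congr rfl fun i _ => ?_
    ring
  rw [hbinom]
  exact hasSum_sum fun i _ => (hasSum_multichoose_sub_mul_geometric i hu).mul_left _

theorem psi_eq_mul {m r s : ℝ} (hr : r ≠ 0) (hr1 : r + 1 ≠ 0) (hmr : r + 1 - m ≠ 0)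
    (hrs : 1 + r * (1 - s) ≠ 0) :
    psi m r s = (1 - m / (r + 1)) *
      (1 + m / (r * (r + 1 - m)) * (r / (r + 1) * s / (1 - r / (r + 1) * s))) := by
  have hy : r / (r + 1) * s / (1 - r / (r + 1) * s) = r * s / (1 + r * (1 - s)) := by
    rw [show 1 - r / (r + 1) * s = (1 + r * (1 - s)) / (r + 1) by field_simp; ring]
    field_simp
  rw [psi, hy]
  set D := 1 + r * (1 - s) with hD
  field_simp
  rw [hD]; ring

theorem stmt3_general (m r : ℝ) (hr : 0 < r) (hmr : m < r + 1) (n : ℕ) :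
    ∀ s ∈ Set.Icc (0 : ℝ) 1,
      (∑' k : ℕ, convPmf m r n k * s ^ k) = (psi m r s) ^ n := by
  rintro s ⟨hs0, hs1⟩
  have hu : ‖r / (r + 1) * s‖ < 1 := by
    rw [Real.norm_of_nonneg (by positivity)]
    exact mul_lt_one_of_nonneg_of_lt_one_left (by positivity)
      ((div_lt_one (by linarith)).2 (by linarith)) hs1
  rw [(hasSum_convPmf_mul_pow m r n hu).tsum_eq,
    psi_eq_mul hr.ne' (by linarith) (by linarith) (by nlinarith)]

/-- for `n ≥ 1`, the n-fold convolution of the BerG(m,r) pmf (equivalently,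
the pmf with pgf `(ψ_{m,r})^n`) is given by the stated formula. -/
theorem stmt3 (m r : ℝ) (hr : 0 < r) (hm : 0 < m) (hmr : m < r + 1)
    (n : ℕ) (hn : 1 ≤ n) :
    ∀ s ∈ Set.Icc (0 : ℝ) 1,
      (∑' k : ℕ, convPmf m r n k * s ^ k) = (psi m r s) ^ n :=
  stmt3_general m r hr hmr n
end

section
/- Let X be a Z₊-valued random variable, (m,r), (m',r') ∈ R, and define the operator (m,r) ⊙ X = Σ_{i=1}^X Z_i with {Z_i} iid with pgf ψ_{m,r} and independent of X. Then (m,r) ⊙ ((m',r') ⊙ X) has the same distribution as ((m,r) ∗ (m',r')) ⊙ X. -/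
def Rset : Set (ℝ × ℝ) := {p | 0 ≤ p.2 ∧ 0 < p.1 ∧ p.1 ≤ p.2 + 1}

def starOp (p q : ℝ × ℝ) : ℝ × ℝ := (p.1 * q.1, p.2 + q.2 * p.1)

/-!
The pgf of `(m,r) ⊙ X` is `Q ∘ ψ_{m,r}`, so the claim reduces to the composition law
`ψ_{m',r'} ∘ ψ_{m,r} = ψ_{(m,r)∗(m',r')}` for the linear fractional maps `ψ`. Writing
`t = 1 - s`, one has `1 - ψ_{m,r}(s) = m t / (1 + r t)`, and substituting this into
`ψ_{m',r'}` the factor `1 + r t` cancels.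
-/

lemma one_sub_psi (m r s : ℝ) : 1 - psi m r s = m * (1 - s) / (1 + r * (1 - s)) :=
  sub_sub_cancel _ _

-- Division by zero makes `ψ_{m,r}(s) = 1` when `1 + r(1-s) = 0`, where the law fails.
lemma psi_psi {m r m' r' s : ℝ} (hs : 1 + r * (1 - s) ≠ 0) :
    psi m' r' (psi m r s) = psi (m * m') (r + r' * m) s := by
  have hden : 1 + r' * (m * (1 - s) / (1 + r * (1 - s)))
      = (1 + (r + r' * m) * (1 - s)) / (1 + r * (1 - s)) := by
    rw [eq_div_iff hs, add_mul, one_mul, mul_assoc, div_mul_cancel₀ _ hs]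
    ring
  rw [psi, one_sub_psi, hden, mul_div_assoc', div_div_div_cancel_right₀ hs, psi]
  ring

lemma psi_psi_eq_psi_starOp {m r m' r' s : ℝ} (hr : 0 ≤ r) (hs : s ≤ 1) :
    psi m' r' (psi m r s)
      = psi (starOp (m, r) (m', r')).1 (starOp (m, r) (m', r')).2 s :=
  psi_psi (by nlinarith)

theorem stmt8_general (m r m' r' : ℝ) (h : (m, r) ∈ Rset)
    (p : ℕ → ℝ) :
    ∀ s ∈ Set.Icc (0 : ℝ) 1,
      (∑' k : ℕ, p k * (psi m' r' (psi m r s)) ^ k)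
        = ∑' k : ℕ, p k *
            (psi (starOp (m, r) (m', r')).1 (starOp (m, r) (m', r')).2 s) ^ k := by
  intro s hs
  rw [psi_psi_eq_psi_starOp h.1 hs.2]

/-- for a Z₊-valued random variable `X` with pmf `p` (pgf `Q`), the
thinning `(m,r) ⊙ X` has pgf `Q ∘ ψ_{m,r}`; the claim that
`(m,r) ⊙ ((m',r') ⊙ X) =d ((m,r) ∗ (m',r')) ⊙ X` is the equality of the
corresponding pgf's `Q(ψ_{m',r'}(ψ_{m,r}(s)))` and `Q(ψ_{(m,r)∗(m',r')}(s))` on `[0,1]`. -/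
theorem stmt8 (m r m' r' : ℝ) (h : (m, r) ∈ Rset) (h' : (m', r') ∈ Rset)
    (p : ℕ → ℝ) (hpos : ∀ k, 0 ≤ p k) (hsum : (∑' k : ℕ, p k) = 1) :
    ∀ s ∈ Set.Icc (0 : ℝ) 1,
      (∑' k : ℕ, p k * (psi m' r' (psi m r s)) ^ k)
        = ∑' k : ℕ, p k *
            (psi (starOp (m, r) (m', r')).1 (starOp (m, r) (m', r')).2 s) ^ k :=
  stmt8_general m r m' r' h p
end

section
/- Let 0 < m < 1, r ≥ 0, and (m',r') ∈ R with -r/(1-m) < m'-r' ≤ min(r/m,1) and r' ≥ r/(1-m). Then the pgf identity ψ_{m',r'}(s) = ψ_{m',r'}(ψ_{m,r}(s)) · ψ_{m₁,r₁}(s) · ψ_{m₂,r₂}(s) holds, where (m₁,r₁) = (r+(r'-m')(m-1), r+(r'-m')m) and (m₂,r₂) = (r'(1-m)-r, r'); i.e., the BerG(m',r') distribution is the stationary marginal of the INAR(1) recursion X_t = (m,r)⊙X_{t-1} + ε_t with ε_t distributed as the convolution of BerG(m₁,r₁) and BerG(m₂,r₂). -/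
/-!
Write `u = 1 - s`. Then `ψ_{m,r}(s) = (1 + (r - m) u) / (1 + r u)`, and these Möbius maps compose as
`ψ_{m',r'} ∘ ψ_{m,r} = ψ_{m m', r + m r'}`. With `r₁ = r + (r' - m') m` the three factors on the right
are `(1 + r₁ u) / (1 + (r + m r') u)`, `(1 + (r' - m') u) / (1 + r₁ u)` and
`(1 + (r + m r') u) / (1 + r' u)`, whose product telescopes to `(1 + (r' - m') u) / (1 + r' u)`.
-/

theorem psi_eq_div (m r s : ℝ) (h : 1 + r * (1 - s) ≠ 0) :
    psi m r s = (1 + (r - m) * (1 - s)) / (1 + r * (1 - s)) := by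
  rw [psi, eq_div_iff h, sub_mul, div_mul_cancel₀ _ h]
  ring

theorem psi_comp (m r m' r' s : ℝ) (h : 1 + r * (1 - s) ≠ 0) :
    psi m' r' (psi m r s) = psi (m * m') (r + m * r') s := by
  have hden : 1 + r' * (1 - psi m r s) = (1 + (r + m * r') * (1 - s)) / (1 + r * (1 - s)) := by
    rw [eq_div_iff h, psi, sub_sub_cancel, add_mul, mul_assoc, div_mul_cancel₀ _ h]
    ring
  rw [psi, hden, psi, sub_sub_cancel, ← mul_div_assoc, div_div_div_cancel_right₀ h, psi]
  ring

theorem stmt12_general (m r m' r' : ℝ) (hm : 0 < m) (hr : 0 ≤ r)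
    (h' : (m', r') ∈ Rset)
    (hc2 : m' - r' ≤ min (r / m) 1) :
    ∀ s ∈ Set.Icc (0 : ℝ) 1,
      psi m' r' s
        = psi m' r' (psi m r s)
            * psi (r + (r' - m') * (m - 1)) (r + (r' - m') * m) s
            * psi (r' * (1 - m) - r) r' s := by
  rintro s ⟨-, hs1⟩
  have hu : 0 ≤ 1 - s := sub_nonneg.mpr hs1
  have hr' : 0 ≤ r' := h'.1
  have hr₁ : 0 ≤ r + (r' - m') * m := by
    have := (le_div_iff₀ hm).mp (le_min_iff.mp hc2).1
    linarith
  have hD : 0 < 1 + r * (1 - s) := by positivity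
  have hD' : 0 < 1 + r' * (1 - s) := by positivity
  have hD₁ : 0 < 1 + (r + (r' - m') * m) * (1 - s) := by positivity
  have hDcomp : 0 < 1 + (r + m * r') * (1 - s) := by positivity
  rw [psi_comp m r m' r' s hD.ne', psi_eq_div _ _ _ hD'.ne', psi_eq_div _ _ _ hDcomp.ne',
    psi_eq_div _ _ _ hD₁.ne', psi_eq_div _ _ _ hD'.ne']
  field_simp
  ring

/-- Proposition 3.6: under the stated parameter constraints, the
BerG(m',r') pgf satisfies the stationarity identity
`ψ_{m',r'}(s) = ψ_{m',r'}(ψ_{m,r}(s)) · ψ_{m₁,r₁}(s) · ψ_{m₂,r₂}(s)`, so the BerG(m',r')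
distribution is the stationary marginal of the INAR(1) recursion with innovations
distributed as the convolution of BerG(m₁,r₁) and BerG(m₂,r₂). -/
theorem stmt12 (m r m' r' : ℝ) (hm : 0 < m) (hm1 : m < 1) (hr : 0 ≤ r)
    (h' : (m', r') ∈ Rset)
    (hc1 : -r / (1 - m) < m' - r') (hc2 : m' - r' ≤ min (r / m) 1)
    (hc3 : r / (1 - m) ≤ r') :
    ∀ s ∈ Set.Icc (0 : ℝ) 1,
      psi m' r' s
        = psi m' r' (psi m r s)
            * psi (r + (r' - m') * (m - 1)) (r + (r' - m') * m) s
            * psi (r' * (1 - m) - r) r' s :=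
  stmt12_general m r m' r' hm hr h' hc2
end

section
/- Let (m',r') ∈ R with 0 < m' ≤ r', and a > 0. Then (ψ_{m',r'}(s))^a is the pgf of a probability distribution on Z₊ (a compound negative binomial distribution). Specifically, ψ_{m',r'}(s) = ψ_{m',m'}(ψ_{1,r'-m'}(s)) and (ψ_{m',m'}(s))^a is the pgf of the negative binomial distribution with parameters (1/(m'+1), a). -/
open PowerSeries Finset

theorem Ring.choose_add_sub_one_eq_ascPochhammer_div (a : ℝ) (n : ℕ) :
    Ring.choose (a + n - 1) n = (ascPochhammer ℝ n).eval a / n.factorial := by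
  rw [Ring.choose_eq_smul, Polynomial.descPochhammer_smeval_eq_ascPochhammer,
    Polynomial.ascPochhammer_smeval_eq_eval, smul_eq_mul, inv_mul_eq_div]
  ring_nf

theorem Real.Gamma_add_nat_div_Gamma_eq {a : ℝ} (ha : ∀ k : ℕ, a ≠ -k) (n : ℕ) :
    Real.Gamma (a + n) / Real.Gamma a = (ascPochhammer ℝ n).eval a := by
  rw [div_eq_iff (Real.Gamma_ne_zero ha)]
  induction n with
  | zero => simp
  | succ n ih =>
    have hne : a + n ≠ 0 := fun h => ha n (by linarith)
    rw [Nat.cast_succ, ← add_assoc, Real.Gamma_add_one hne, ih, ascPochhammer_succ_eval]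
    ring

theorem hasSum_ascPochhammer_div_factorial_mul_pow (a : ℝ) {x : ℝ} (hx : |x| < 1) :
    HasSum (fun n => (ascPochhammer ℝ n).eval a / n.factorial * x ^ n) (1 / (1 - x) ^ a) := by
  have h := (Real.one_div_one_sub_rpow_hasFPowerSeriesOnBall_zero a).hasSum
    (y := x) (by simpa [enorm_eq_nnnorm, ← NNReal.coe_lt_one] using hx)
  simpa [FormalMultilinearSeries.ofScalars_apply_eq, Ring.choose_add_sub_one_eq_ascPochhammer_div,
    mul_comm (x ^ _)] using h

namespace PowerSeries

theorem coeff_pow_nonneg {R : Type*} [CommSemiring R] [PartialOrder R] [IsOrderedRing R]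
    {P : R⟦X⟧} (hP : ∀ n, 0 ≤ coeff n P) (k n : ℕ) : 0 ≤ coeff n (P ^ k) := by
  induction k generalizing n with
  | zero => rw [pow_zero, coeff_one]; split <;> simp
  | succ k ih =>
    rw [pow_succ, coeff_mul]
    exact sum_nonneg fun p _ => mul_nonneg (ih _) (hP _)

theorem hasSum_coeff_mul_mul_pow {P Q : ℝ⟦X⟧} {x F G : ℝ}
    (hP : HasSum (fun n => coeff n P * x ^ n) F) (hQ : HasSum (fun n => coeff n Q * x ^ n) G) :
    HasSum (fun n => coeff n (P * Q) * x ^ n) (F * G) := by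
  have hterm : (fun n => coeff n (P * Q) * x ^ n) = fun n =>
      ∑ p ∈ antidiagonal n, (coeff p.1 P * x ^ p.1) * (coeff p.2 Q * x ^ p.2) := by
    funext n
    rw [coeff_mul, sum_mul]
    refine sum_congr rfl fun p hp => ?_
    rw [← mem_antidiagonal.1 hp, pow_add]
    ring
  have hPn : Summable fun n => ‖coeff n P * x ^ n‖ := hP.summable.abs
  have hQn : Summable fun n => ‖coeff n Q * x ^ n‖ := hQ.summable.abs
  rw [hterm, ← hP.tsum_eq, ← hQ.tsum_eq,
    tsum_mul_tsum_eq_tsum_sum_antidiagonal_of_summable_norm hPn hQn]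
  exact (summable_norm_sum_mul_antidiagonal_of_summable_norm hPn hQn).of_norm.hasSum

theorem hasSum_coeff_pow_mul_pow {P : ℝ⟦X⟧} {x F : ℝ}
    (hP : HasSum (fun n => coeff n P * x ^ n) F) (k : ℕ) :
    HasSum (fun n => coeff n (P ^ k) * x ^ n) (F ^ k) := by
  induction k with
  | zero =>
    have hone : (fun n => coeff n (1 : ℝ⟦X⟧) * x ^ n) = fun n => if n = 0 then 1 else 0 := by
      funext n
      rw [coeff_one]
      split_ifs with hn <;> simp [hn]
    rw [pow_zero, pow_zero, hone]
    exact hasSum_ite_eq 0 1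
  | succ k ih => rw [pow_succ, pow_succ]; exact hasSum_coeff_mul_mul_pow ih hP

theorem hasSum_tsum_mul_coeff_pow_mul_pow {q : ℕ → ℝ} {P : ℝ⟦X⟧} {x F G : ℝ}
    (hq : ∀ k, 0 ≤ q k) (hP : ∀ n, 0 ≤ coeff n P) (hx : 0 ≤ x)
    (hPx : HasSum (fun n => coeff n P * x ^ n) F) (hqF : HasSum (fun k => q k * F ^ k) G) :
    HasSum (fun n => (∑' k, q k * coeff n (P ^ k)) * x ^ n) G := by
  set f : ℕ × ℕ → ℝ := fun p => q p.1 * coeff p.2 (P ^ p.1) * x ^ p.2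
  have hf0 : 0 ≤ f := fun p =>
    mul_nonneg (mul_nonneg (hq _) (coeff_pow_nonneg hP _ _)) (pow_nonneg hx _)
  have hrow : ∀ k, HasSum (fun n => f (k, n)) (q k * F ^ k) := fun k => by
    simpa only [f, mul_assoc] using (hasSum_coeff_pow_mul_pow hPx k).mul_left (q k)
  have hfs : Summable f := by
    rw [summable_prod_of_nonneg hf0]
    exact ⟨fun k => (hrow k).summable, by simpa only [(hrow _).tsum_eq] using hqF.summable⟩
  have hfG : HasSum f G := by
    have h := hfs.hasSum
    rwa [(h.prod_fiberwise hrow).unique hqF] at h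
  have hcol : ∀ n, HasSum (fun k => f (k, n)) ((∑' k, q k * coeff n (P ^ k)) * x ^ n) :=
    fun n => by
      rw [← tsum_mul_right]
      exact (((Equiv.prodComm ℕ ℕ).summable_iff.2 hfs).prod_factor n).hasSum
  exact ((Equiv.prodComm ℕ ℕ).hasSum_iff.2 hfG).prod_fiberwise hcol

end PowerSeries

theorem psi_eq_psi_comp_psi_one {m r s : ℝ} (h₁ : 1 + (r - m) * (1 - s) ≠ 0) :
    psi m r s = psi m m (psi 1 (r - m) s) := by
  have hden : 1 + m * ((1 - s) / (1 + (r - m) * (1 - s)))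
      = (1 + r * (1 - s)) / (1 + (r - m) * (1 - s)) := by
    rw [eq_div_iff h₁, add_mul, one_mul, mul_assoc m, div_mul_cancel₀ _ h₁]
    ring
  rw [psi, psi, psi, sub_sub_cancel, one_mul, hden, ← mul_div_assoc,
    div_div_div_cancel_right₀ h₁]

theorem psi_one_mem_Icc {c s : ℝ} (hc : 0 ≤ c) (hs : s ∈ Set.Icc (0 : ℝ) 1) :
    psi 1 c s ∈ Set.Icc (0 : ℝ) 1 := by
  have hden : 0 < 1 + c * (1 - s) := by nlinarith [hs.2]
  rw [psi, one_mul, Set.mem_Icc, sub_nonneg, div_le_one hden, sub_le_self_iff]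
  exact ⟨by linarith [mul_nonneg hc (sub_nonneg.2 hs.2), hs.1],
    div_nonneg (by linarith [hs.2]) hden.le⟩

/-- The negative binomial law with parameters `(1/(m+1), a)`. -/
noncomputable def negBinomialCoeff (m a : ℝ) (k : ℕ) : ℝ :=
  (ascPochhammer ℝ k).eval a / k.factorial * (1 / (m + 1)) ^ a * (m / (m + 1)) ^ k

theorem negBinomialCoeff_nonneg {m a : ℝ} (hm : 0 ≤ m) (ha : 0 < a) (k : ℕ) :
    0 ≤ negBinomialCoeff m a k := by
  have := ascPochhammer_pos k a ha
  unfold negBinomialCoeff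
  positivity

theorem hasSum_negBinomialCoeff_mul_pow {m : ℝ} (hm : 0 ≤ m) (a : ℝ) {t : ℝ} (ht : |t| ≤ 1) :
    HasSum (fun k => negBinomialCoeff m a k * t ^ k) (psi m m t ^ a) := by
  have hm1 : 0 < m + 1 := by linarith
  have hx : |m / (m + 1) * t| < 1 := by
    rw [abs_mul, abs_of_nonneg (by positivity)]
    calc m / (m + 1) * |t| ≤ m / (m + 1) := mul_le_of_le_one_right (by positivity) ht
      _ < 1 := (div_lt_one hm1).2 (by linarith)
  have hx' : 0 < 1 - m / (m + 1) * t := by linarith [le_abs_self (m / (m + 1) * t)]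
  have hden : 0 < 1 + m * (1 - t) := by nlinarith [(abs_le.1 ht).2]
  have hpsi : psi m m t = 1 / (m + 1) * (1 / (1 - m / (m + 1) * t)) := by
    rw [show 1 - m / (m + 1) * t = (1 + m * (1 - t)) / (m + 1) by field_simp; ring, psi,
      one_sub_div hden.ne', add_sub_cancel_right, one_div_div, one_div_mul_eq_div,
      div_div_cancel_left' hm1.ne', one_div]
  rw [hpsi, Real.mul_rpow (by positivity) (by positivity), Real.div_rpow zero_le_one hx'.le,
    Real.one_rpow]
  have hterm : (fun k => negBinomialCoeff m a k * t ^ k) = fun k =>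
      (1 / (m + 1)) ^ a * ((ascPochhammer ℝ k).eval a / k.factorial * (m / (m + 1) * t) ^ k) := by
    funext k
    rw [negBinomialCoeff, mul_pow]
    ring
  rw [hterm]
  exact (hasSum_ascPochhammer_div_factorial_mul_pow a hx).mul_left _

noncomputable def psiOneSeries (c : ℝ) : ℝ⟦X⟧ :=
  mk fun n => if n = 0 then c / (1 + c) else (c / (1 + c)) ^ (n - 1) / (1 + c) ^ 2

theorem coeff_psiOneSeries_nonneg {c : ℝ} (hc : 0 ≤ c) (n : ℕ) :
    0 ≤ coeff n (psiOneSeries c) := by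
  rw [psiOneSeries, coeff_mk]
  split <;> positivity

theorem hasSum_coeff_psiOneSeries_mul_pow {c : ℝ} (hc : 0 ≤ c) {s : ℝ} (hs : |s| ≤ 1) :
    HasSum (fun n => coeff n (psiOneSeries c) * s ^ n) (psi 1 c s) := by
  have hc1 : 0 < 1 + c := by linarith
  have hden : 0 < 1 + c * (1 - s) := by nlinarith [(abs_le.1 hs).2]
  have hβ : |c / (1 + c) * s| < 1 := by
    rw [abs_mul, abs_of_nonneg (by positivity)]
    calc c / (1 + c) * |s| ≤ c / (1 + c) := mul_le_of_le_one_right (by positivity) hs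
      _ < 1 := (div_lt_one hc1).2 (by linarith)
  have htail : HasSum (fun n => coeff (n + 1) (psiOneSeries c) * s ^ (n + 1))
      (s / (1 + c) ^ 2 * (1 - c / (1 + c) * s)⁻¹) := by
    have hterm : (fun n => coeff (n + 1) (psiOneSeries c) * s ^ (n + 1))
        = fun n => s / (1 + c) ^ 2 * (c / (1 + c) * s) ^ n := by
      funext n
      rw [psiOneSeries, coeff_mk, if_neg n.add_one_ne_zero, Nat.add_sub_cancel]
      ring
    rw [hterm]
    exact (hasSum_geometric_of_abs_lt_one hβ).mul_left _
  convert HasSum.zero_add (f := fun n => coeff n (psiOneSeries c) * s ^ n) htail using 1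
  rw [psiOneSeries, coeff_mk, if_pos rfl, pow_zero, mul_one, psi,
    show 1 - c / (1 + c) * s = (1 + c * (1 - s)) / (1 + c) by field_simp; ring, inv_div,
    div_mul_div_comm, div_add_div _ _ hc1.ne' (by positivity), one_mul,
    one_sub_div hden.ne', div_eq_div_iff hden.ne' (by positivity)]
  ring

noncomputable def compoundNegBinomialCoeff (m r a : ℝ) (n : ℕ) : ℝ :=
  ∑' k, negBinomialCoeff m a k * coeff n (psiOneSeries (r - m) ^ k)

theorem compoundNegBinomialCoeff_nonneg {m r a : ℝ} (hm : 0 ≤ m) (hmr : m ≤ r) (ha : 0 < a)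
    (n : ℕ) : 0 ≤ compoundNegBinomialCoeff m r a n :=
  tsum_nonneg fun k => mul_nonneg (negBinomialCoeff_nonneg hm ha k)
    (coeff_pow_nonneg (coeff_psiOneSeries_nonneg (sub_nonneg.2 hmr)) k n)

theorem hasSum_compoundNegBinomialCoeff_mul_pow {m r a : ℝ} (hm : 0 ≤ m) (hmr : m ≤ r)
    (ha : 0 < a) {s : ℝ} (hs : s ∈ Set.Icc (0 : ℝ) 1) :
    HasSum (fun n => compoundNegBinomialCoeff m r a n * s ^ n) (psi m r s ^ a) := by
  have hc : 0 ≤ r - m := sub_nonneg.2 hmr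
  have hF := psi_one_mem_Icc hc hs
  rw [psi_eq_psi_comp_psi_one (by nlinarith [hs.2])]
  exact hasSum_tsum_mul_coeff_pow_mul_pow (negBinomialCoeff_nonneg hm ha)
    (coeff_psiOneSeries_nonneg hc) hs.1
    (hasSum_coeff_psiOneSeries_mul_pow hc (abs_le.2 ⟨by linarith [hs.1], hs.2⟩))
    (hasSum_negBinomialCoeff_mul_pow hm a (abs_le.2 ⟨by linarith [hF.1], hF.2⟩))

/-- Lemma 3.7: for `0 < m' ≤ r'` and `a > 0`, `(ψ_{m',r'}(s))^a` is the pgf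
of a distribution on Z₊ (a compound negative binomial distribution). Specifically
`ψ_{m',r'} = ψ_{m',m'} ∘ ψ_{1,r'-m'}` and `(ψ_{m',m'}(s))^a` is the pgf of the negative
binomial distribution with parameters `(1/(m'+1), a)`. -/
theorem stmt13 (m' r' a : ℝ) (hm' : 0 < m') (hmr : m' ≤ r') (ha : 0 < a) :
    (∃ p : ℕ → ℝ, (∀ k, 0 ≤ p k) ∧ (∑' k : ℕ, p k) = 1 ∧
        ∀ s ∈ Set.Icc (0 : ℝ) 1, (∑' k : ℕ, p k * s ^ k) = (psi m' r' s) ^ a) ∧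
    (∀ s ∈ Set.Icc (0 : ℝ) 1, psi m' r' s = psi m' m' (psi 1 (r' - m') s)) ∧
    (∀ s ∈ Set.Icc (0 : ℝ) 1,
        (psi m' m' s) ^ a
          = ∑' k : ℕ, (Real.Gamma (a + k) / (Real.Gamma a * (Nat.factorial k))) *
              (1 / (m' + 1)) ^ a * (m' / (m' + 1)) ^ k * s ^ k) := by
  refine ⟨⟨compoundNegBinomialCoeff m' r' a, compoundNegBinomialCoeff_nonneg hm'.le hmr ha, ?_,
    fun s hs => (hasSum_compoundNegBinomialCoeff_mul_pow hm'.le hmr ha hs).tsum_eq⟩,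
    fun s hs => psi_eq_psi_comp_psi_one (by nlinarith [hs.2]), ?_⟩
  · simpa [psi] using (hasSum_compoundNegBinomialCoeff_mul_pow hm'.le hmr ha
      (Set.right_mem_Icc.2 zero_le_one)).tsum_eq
  · intro s hs
    have ha' : ∀ k : ℕ, a ≠ -k := fun k h => by linarith [h ▸ ha, k.cast_nonneg (α := ℝ)]
    rw [← (hasSum_negBinomialCoeff_mul_pow hm'.le a
      (abs_le.2 ⟨by linarith [hs.1], hs.2⟩)).tsum_eq]
    refine tsum_congr fun k => ?_
    rw [← div_div, Real.Gamma_add_nat_div_Gamma_eq ha', negBinomialCoeff]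
end

section
/- For r' = 0.2, m' = 0.8, the second derivative of (ψ_{0.8,0.2}(s))^{1/2} at s = 0 is negative; hence (ψ_{m',r'}(s))^{1/2} need not be a pgf when r' < m' ≤ r'+1. -/
open Filter Topology

theorem hasDerivAt_const_mul_one_sub (c s : ℝ) :
    HasDerivAt (fun s : ℝ => c * (1 - s)) (-c) s := by
  simpa using ((hasDerivAt_id s).const_sub 1).const_mul c

theorem hasDerivAt_psi {m r s : ℝ} (hs : 1 + r * (1 - s) ≠ 0) :
    HasDerivAt (psi m r) (m / (1 + r * (1 - s)) ^ 2) s := by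
  refine (((hasDerivAt_const_mul_one_sub m s).fun_div
    ((hasDerivAt_const_mul_one_sub r s).const_add 1) hs).const_sub 1).congr_deriv ?_
  field_simp
  ring

theorem hasDerivAt_deriv_psi {m r s : ℝ} (hs : 1 + r * (1 - s) ≠ 0) :
    HasDerivAt (fun s => m / (1 + r * (1 - s)) ^ 2) (2 * m * r / (1 + r * (1 - s)) ^ 3) s := by
  refine ((hasDerivAt_const s m).fun_div
    (((hasDerivAt_const_mul_one_sub r s).const_add 1).fun_pow 2) (pow_ne_zero 2 hs)).congr_deriv ?_
  field_simp
  ring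

theorem psi_zero_pos {m r : ℝ} (hr : 0 < 1 + r) (hm : m < 1 + r) : 0 < psi m r 0 := by
  simp only [psi, sub_zero, mul_one]
  rw [sub_pos, div_lt_one hr]
  exact hm

theorem iteratedDeriv_two_sqrt {u u' : ℝ → ℝ} {x u'' : ℝ}
    (hu : ∀ᶠ y in 𝓝 x, HasDerivAt u (u' y) y) (hu' : HasDerivAt u' u'' x) (hx : 0 < u x) :
    iteratedDeriv 2 (fun y => √(u y)) x = (2 * u x * u'' - u' x ^ 2) / (4 * u x * √(u x)) := by
  have hpos : ∀ᶠ y in 𝓝 x, 0 < u y := hu.self_of_nhds.continuousAt.eventually_const_lt hx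
  have hderiv : deriv (fun y => √(u y)) =ᶠ[𝓝 x] fun y => u' y / (2 * √(u y)) := by
    filter_upwards [hu, hpos] with y hy hy₀
    exact (hy.sqrt hy₀.ne').deriv
  have hsqrt : 0 < √(u x) := Real.sqrt_pos.mpr hx
  have hderiv' := hu'.fun_div ((hu.self_of_nhds.sqrt hx.ne').const_mul 2) (by positivity)
  rw [iteratedDeriv_succ, iteratedDeriv_one, hderiv.deriv_eq, hderiv'.deriv]
  have hsq : √(u x) ^ 2 = u x := Real.sq_sqrt hx.le
  field_simp
  rw [hsq]
  ring

theorem iteratedDeriv_two_sqrt_psi_zero {m r : ℝ} (hr : 0 < 1 + r) (hm : m < 1 + r) :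
    iteratedDeriv 2 (fun s => √(psi m r s)) 0 =
      m * (4 * r * (1 + r - m) - m) / (1 + r) ^ 4 / (4 * psi m r 0 * √(psi m r 0)) := by
  have hev : ∀ᶠ s in 𝓝 (0 : ℝ), 1 + r * (1 - s) ≠ 0 :=
    ContinuousAt.eventually_ne (by fun_prop) (by simpa using hr.ne')
  rw [iteratedDeriv_two_sqrt (hev.mono fun s hs => hasDerivAt_psi hs)
    (hasDerivAt_deriv_psi (by simpa using hr.ne')) (psi_zero_pos hr hm)]
  congr 1
  simp only [psi, sub_zero, mul_one]
  field_simp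
  ring

theorem iteratedDeriv_two_sqrt_psi_zero_neg {m r : ℝ} (hm₀ : 0 < m) (hm : m < 1 + r)
    (hmr : 4 * r * (1 + r - m) < m) :
    iteratedDeriv 2 (fun s => √(psi m r s)) 0 < 0 := by
  have hr : 0 < 1 + r := hm₀.trans hm
  have hpsi := psi_zero_pos hr hm
  rw [iteratedDeriv_two_sqrt_psi_zero hr hm]
  refine div_neg_of_neg_of_pos (div_neg_of_neg_of_pos ?_ (by positivity)) (by positivity)
  exact mul_neg_of_pos_of_neg hm₀ (by linarith)

theorem tsum_mul_pow_le_of_nonneg {p : ℕ → ℝ} (hp : ∀ k, 0 ≤ p k) (hsum : Summable p) {s : ℝ}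
    (hs₀ : 0 ≤ s) (hs₁ : s ≤ 1) :
    ∑' k, p k * s ^ k ≤ (1 - s) * p 0 + s * ∑' k, p k := by
  have hterm : ∀ k, p (k + 1) * s ^ (k + 1) ≤ s * p (k + 1) := fun k => by
    rw [mul_comm s, pow_succ']
    exact mul_le_mul_of_nonneg_left (mul_le_of_le_one_right hs₀ (pow_le_one₀ hs₀ hs₁)) (hp _)
  have hsum' : Summable fun k => p k * s ^ k :=
    hsum.of_nonneg_of_le (fun k => mul_nonneg (hp k) (pow_nonneg hs₀ k))
      (fun k => mul_le_of_le_one_right (hp k) (pow_le_one₀ hs₀ hs₁))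
  have htail := (hsum'.comp_injective (add_left_injective 1)).tsum_le_tsum hterm
    ((hsum.comp_injective (add_left_injective 1)).mul_left s)
  rw [tsum_mul_left] at htail
  rw [hsum'.tsum_eq_zero_add, hsum.tsum_eq_zero_add, pow_zero, mul_one]
  linarith

theorem one_add_sqrt_one_third_div_two_lt : (1 + √(1 / 3)) / 2 < √(7 / 11) := by
  rw [Real.lt_sqrt (by positivity)]
  have h3 : √(1 / 3) ^ 2 = 1 / 3 := Real.sq_sqrt (by norm_num)
  nlinarith [Real.sqrt_nonneg (1 / 3 : ℝ)]

/-- for `r' = 0.2`, `m' = 0.8`, the second derivative of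
`(ψ_{0.8,0.2}(s))^{1/2}` at `s = 0` is negative; hence `(ψ_{0.8,0.2})^{1/2}` is not a pgf
(a counterexample showing Lemma 3.7 fails when `r' < m' ≤ r'+1`). -/
theorem stmt14 :
    iteratedDeriv 2 (fun s : ℝ => (psi 0.8 0.2 s) ^ ((1 : ℝ) / 2)) 0 < 0 ∧
    ¬ ∃ p : ℕ → ℝ, (∀ k, 0 ≤ p k) ∧ (∑' k : ℕ, p k) = 1 ∧
        ∀ s ∈ Set.Icc (0 : ℝ) 1,
          (∑' k : ℕ, p k * s ^ k) = (psi 0.8 0.2 s) ^ ((1 : ℝ) / 2) := by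
  simp only [← Real.sqrt_eq_rpow]
  refine ⟨iteratedDeriv_two_sqrt_psi_zero_neg (by norm_num) (by norm_num) (by norm_num), ?_⟩
  rintro ⟨p, hp, hsum, hG⟩
  have hsummable : Summable p := by
    by_contra h
    simp [tsum_eq_zero_of_not_summable h] at hsum
  have hG₀ : p 0 = √(1 / 3) := by
    have := hG 0 (by norm_num)
    rw [tsum_eq_single 0 fun k hk => by simp [hk]] at this
    norm_num [psi] at this ⊢
    exact this
  have hG_half : ∑' k, p k * (1 / 2 : ℝ) ^ k = √(7 / 11) := by
    rw [hG (1 / 2) (by norm_num)]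
    norm_num [psi]
  have hchord := tsum_mul_pow_le_of_nonneg hp hsummable (s := 1 / 2) (by norm_num) (by norm_num)
  rw [hG_half, hG₀, hsum] at hchord
  linarith [one_add_sqrt_one_third_div_two_lt]
end

section
/- Let {p_n} be a pmf on Z₊ with pgf φ, α > 0, θ > 0, and set q_n = (2θn+1)p_n - θ((n+1)p_{n+1} + (n-1)p_{n-1}) (with p_{-1} = 0). If φ(s) = θ^{-1} e^{1/(θ(1-s))} ∫_s^1 (1-w)^{-2} e^{-1/(θ(1-w))} Q(w) dw for some pgf Q of an α-monotone distribution, then q_n ≥ 0 and (n+α)q_n ≥ (n+1)q_{n+1} for every n ≥ 0. -/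
/-!
Differentiating the integral representation of `φ` gives `Q(s) = φ(s) - θ(1-s)²φ'(s)` on `(0,1)`,
and expanding the right-hand side as a power series shows that its coefficients are exactly the
`q_n`. A real power series vanishing on an interval `(0, r)` has zero coefficients (isolated
zeros of analytic functions), so the `q_n` are the coefficients of `Q`; nonnegativity and
`α`-monotonicity are then inherited from the distribution of `Q`.
-/

open MeasureTheory Set Filter Topology

/-- `q_n = (2θn+1)p_n - θ((n+1)p_{n+1} + (n-1)p_{n-1})` with `p_{-1} = 0`. -/
noncomputable def qcoef (θ : ℝ) (p : ℕ → ℝ) (n : ℕ) : ℝ :=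
  (2 * θ * n + 1) * p n -
    θ * ((n + 1) * p (n + 1) + (if n = 0 then 0 else ((n : ℝ) - 1) * p (n - 1)))

noncomputable def pgf (c : ℕ → ℝ) (s : ℝ) : ℝ := ∑' n, c n * s ^ n

def derivCoeff (c : ℕ → ℝ) (n : ℕ) : ℝ := (n + 1) * c (n + 1)

section PowerSeries

variable {c : ℕ → ℝ} {C s : ℝ}

lemma summable_mul_pow_of_abs_le (hc : ∀ n, |c n| ≤ C * (n + 1)) (hs : |s| < 1) :
    Summable fun n => c n * s ^ n := by
  have hmajor : Summable fun n : ℕ => C * ((n + 1) * |s| ^ n) := by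
    refine Summable.mul_left C ?_
    have hlin := summable_pow_mul_geometric_of_norm_lt_one 1 (r := |s|) (by simpa using hs)
    simpa [add_mul] using hlin.add (summable_geometric_of_lt_one (abs_nonneg s) hs)
  refine Summable.of_norm_bounded hmajor fun n => ?_
  rw [Real.norm_eq_abs, abs_mul, abs_pow, ← mul_assoc]
  exact mul_le_mul_of_nonneg_right (hc n) (by positivity)

lemma hasSum_pgf (hc : ∀ n, |c n| ≤ C) (hs : |s| < 1) :
    HasSum (fun n => c n * s ^ n) (pgf c s) := by
  refine (summable_mul_pow_of_abs_le (C := C) (fun n => ?_) hs).hasSum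
  exact (hc n).trans (le_mul_of_one_le_right ((abs_nonneg _).trans (hc 0)) (by simp))

lemma hasSum_pgf_derivCoeff (hc : ∀ n, |c n| ≤ C) (hs : |s| < 1) :
    HasSum (fun n => derivCoeff c n * s ^ n) (pgf (derivCoeff c) s) := by
  refine (summable_mul_pow_of_abs_le (C := C) (fun n => ?_) hs).hasSum
  rw [derivCoeff, abs_mul, abs_of_nonneg (by positivity : (0 : ℝ) ≤ n + 1), mul_comm]
  exact mul_le_mul_of_nonneg_right (hc _) (by positivity)

lemma hasDerivAt_pgf (hc : ∀ n, |c n| ≤ C) (hs : |s| < 1) :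
    HasDerivAt (pgf c) (pgf (derivCoeff c) s) s := by
  obtain ⟨r, hsr, hr1⟩ := exists_between hs
  have hr0 : 0 < r := (abs_nonneg s).trans_lt hsr
  have hmajor : Summable fun n : ℕ => C * r⁻¹ * (n * r ^ n) := by
    refine Summable.mul_left _ ?_
    simpa using summable_pow_mul_geometric_of_norm_lt_one 1 (r := r)
      (by rwa [Real.norm_eq_abs, abs_of_pos hr0])
  have hbound : ∀ n (y : ℝ), y ∈ Metric.ball 0 r →
      ‖c n * (n * y ^ (n - 1))‖ ≤ C * r⁻¹ * (n * r ^ n) := by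
    intro n y hy
    rw [mem_ball_zero_iff, Real.norm_eq_abs] at hy
    have hpow : (n : ℝ) * |y| ^ (n - 1) ≤ r⁻¹ * (n * r ^ n) := by
      rcases n with _ | n
      · simp
      · calc ((n + 1 : ℕ) : ℝ) * |y| ^ (n + 1 - 1) ≤ (n + 1 : ℕ) * r ^ n := by
              rw [Nat.add_sub_cancel]; have := hy.le; gcongr
          _ = r⁻¹ * ((n + 1 : ℕ) * r ^ (n + 1)) := by field_simp; ring
    rw [Real.norm_eq_abs, abs_mul, abs_mul, abs_pow, Nat.abs_cast, mul_assoc]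
    exact mul_le_mul (hc n) hpow (by positivity) ((abs_nonneg _).trans (hc 0))
  have hderiv : HasDerivAt (pgf c) (∑' n : ℕ, c n * (n * s ^ (n - 1))) s :=
    hasDerivAt_tsum_of_isPreconnected hmajor Metric.isOpen_ball (convex_ball 0 r).isPreconnected
      (fun n y _ => (hasDerivAt_pow n y).const_mul (c n)) hbound (Metric.mem_ball_self hr0)
      (hasSum_single 0 fun n hn => by simp [hn]).summable (by simpa using hsr)
  convert hderiv using 1
  rw [tsum_eq_zero_add' (by simpa [derivCoeff, mul_assoc, mul_left_comm] using
    (hasSum_pgf_derivCoeff hc hs).summable)]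
  simp [pgf, derivCoeff, mul_assoc, mul_left_comm]

end PowerSeries

lemma eq_zero_of_forall_hasSum_mul_pow_zero {c : ℕ → ℝ} {r : ℝ} (hr : 0 < r)
    (h : ∀ s ∈ Ioo 0 r, HasSum (fun n => c n * s ^ n) 0) : c = 0 := by
  set P := FormalMultilinearSeries.ofScalars ℝ c
  have hsum : Summable fun n => ‖P n‖ * (r / 2) ^ n := by
    simp only [P, FormalMultilinearSeries.ofScalars_norm, Real.norm_eq_abs]
    have := (h (r / 2) ⟨by positivity, by linarith⟩).summable.abs
    simpa only [abs_mul, abs_pow, abs_of_pos (half_pos hr)] using this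
  have hrad : 0 < P.radius :=
    lt_of_lt_of_le (ENNReal.coe_pos.2 (show (0 : ℝ) < r / 2 by positivity))
      (P.le_radius_of_summable (r := ⟨r / 2, by positivity⟩) hsum)
  have hP : HasFPowerSeriesAt P.sum P 0 := (P.hasFPowerSeriesOnBall hrad).hasFPowerSeriesAt
  have hvanish : ∀ᶠ z in 𝓝[>] (0 : ℝ), P.sum z = 0 := by
    filter_upwards [Ioo_mem_nhdsGT hr] with z hz
    rw [← FormalMultilinearSeries.ofScalarsSum, FormalMultilinearSeries.ofScalars_sum_eq]
    exact (h z hz).tsum_eq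
  have hlocal : ∀ᶠ z in 𝓝 (0 : ℝ), P.sum z = 0 :=
    hP.analyticAt.frequently_zero_iff_eventually_zero.1
      (hvanish.frequently.filter_mono (nhdsGT_le_nhdsNE 0))
  exact (FormalMultilinearSeries.ofScalars_series_eq_zero ℝ).1 (hP.eq_zero_of_eventually hlocal)

lemma HasSum.mul_pow_shift {a b : ℕ → ℝ} {s A : ℝ} (h : HasSum (fun n => a n * s ^ n) A)
    (hb0 : b 0 = 0) (hb : ∀ n, b (n + 1) = a n) : HasSum (fun n => b n * s ^ n) (s * A) := by
  rw [← hasSum_nat_add_iff' 1]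
  simpa [hb0, hb, pow_succ, mul_comm, mul_left_comm] using h.mul_left s

lemma hasSum_qcoef_mul_pow (θ : ℝ) {p : ℕ → ℝ} {C s : ℝ} (hp : ∀ n, |p n| ≤ C) (hs : |s| < 1) :
    HasSum (fun n => qcoef θ p n * s ^ n)
      (pgf p s - θ * (1 - s) ^ 2 * pgf (derivCoeff p) s) := by
  set D := pgf (derivCoeff p) s
  have hD := hasSum_pgf_derivCoeff hp hs
  have hsD : HasSum (fun n : ℕ => n * p n * s ^ n) (s * D) :=
    hD.mul_pow_shift (by simp) (fun n => by push_cast [derivCoeff]; ring)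
  have hssD : HasSum (fun n : ℕ => (if n = 0 then 0 else ((n : ℝ) - 1) * p (n - 1)) * s ^ n)
      (s * (s * D)) :=
    hsD.mul_pow_shift (by simp) (fun n => by simp)
  have hsum := (((hasSum_pgf hp hs).add (hsD.mul_left (2 * θ))).sub (hD.mul_left θ)).sub
    (hssD.mul_left θ)
  rw [show pgf p s - θ * (1 - s) ^ 2 * D =
    pgf p s + 2 * θ * (s * D) - θ * D - θ * (s * (s * D)) by ring]
  exact hsum.congr_fun fun n => by simp only [qcoef, derivCoeff]; ring

noncomputable def expKernel (θ w : ℝ) : ℝ := ((1 - w) ^ 2)⁻¹ * Real.exp (-(1 / (θ * (1 - w))))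

section Kernel

variable {θ : ℝ}

lemma expKernel_nonneg (θ w : ℝ) : 0 ≤ expKernel θ w := by
  unfold expKernel; positivity

lemma sq_mul_exp_neg_le_two {y : ℝ} (hy : 0 ≤ y) : y ^ 2 * Real.exp (-y) ≤ 2 := by
  rw [Real.exp_neg, ← div_eq_mul_inv, div_le_iff₀ (Real.exp_pos y)]
  nlinarith [Real.quadratic_le_exp_of_nonneg hy]

lemma expKernel_le (hθ : 0 < θ) {w : ℝ} (hw : w < 1) : expKernel θ w ≤ 2 * θ ^ 2 := by
  have hy := sq_mul_exp_neg_le_two (by positivity : 0 ≤ 1 / (θ * (1 - w)))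
  have hform : expKernel θ w = θ ^ 2 * ((1 / (θ * (1 - w))) ^ 2 * Real.exp (-(1 / (θ * (1 - w))))) := by
    unfold expKernel; field_simp
  rw [hform, mul_comm 2]
  exact mul_le_mul_of_nonneg_left hy (by positivity)

lemma continuousAt_expKernel (hθ : θ ≠ 0) {w : ℝ} (hw : w ≠ 1) :
    ContinuousAt (expKernel θ) w := by
  have h1w : 1 - w ≠ 0 := sub_ne_zero.2 hw.symm
  unfold expKernel
  fun_prop (disch := simp [hθ, h1w])

lemma integrableOn_expKernel_mul {a M : ℝ} {Q : ℝ → ℝ} (hθ : 0 < θ)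
    (hQc : ContinuousOn Q (Ioo a 1)) (hQb : ∀ w ∈ Ioo a 1, |Q w| ≤ M) :
    IntegrableOn (fun w => expKernel θ w * Q w) (Ioo a 1) := by
  have hcont : ContinuousOn (fun w => expKernel θ w * Q w) (Ioo a 1) :=
    (continuousOn_of_forall_continuousAt fun w hw =>
      continuousAt_expKernel hθ.ne' hw.2.ne).mul hQc
  refine IntegrableOn.of_bound measure_Ioo_lt_top (hcont.aestronglyMeasurable measurableSet_Ioo)
    (2 * θ ^ 2 * M) ?_
  filter_upwards [ae_restrict_mem measurableSet_Ioo] with w hw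
  rw [Real.norm_eq_abs, abs_mul, abs_of_nonneg (expKernel_nonneg θ w)]
  exact mul_le_mul (expKernel_le hθ hw.2) (hQb w hw) (abs_nonneg _) (by positivity)

lemma hasDerivAt_exp_one_div_mul_one_sub (hθ : θ ≠ 0) {s : ℝ} (hs : s ≠ 1) :
    HasDerivAt (fun x => Real.exp (1 / (θ * (1 - x))))
      (Real.exp (1 / (θ * (1 - s))) / (θ * (1 - s) ^ 2)) s := by
  have h1s : 1 - s ≠ 0 := sub_ne_zero.2 hs.symm
  have hinv := (((hasDerivAt_id s).const_sub 1).const_mul θ).inv (mul_ne_zero hθ h1s)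
  convert hinv.exp using 1
  · simp [one_div]
  · simp only [Pi.inv_apply, id, one_div]
    field_simp

lemma eq_sub_mul_deriv_of_eq_integral {φ Q : ℝ → ℝ} {φ' a s : ℝ} (hθ : 0 < θ)
    (hs : s ∈ Ioo a 1)
    (hφ : ∀ᶠ x in 𝓝 s, φ x = θ⁻¹ * Real.exp (1 / (θ * (1 - x))) *
      ∫ w in x..1, expKernel θ w * Q w)
    (hφ' : HasDerivAt φ φ' s)
    (hint : IntegrableOn (fun w => expKernel θ w * Q w) (Ioo a 1))
    (hQ : ContinuousAt Q s) :
    Q s = φ s - θ * (1 - s) ^ 2 * φ' := by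
  have h1s : 1 - s ≠ 0 := sub_ne_zero.2 hs.2.ne'
  have hG : HasDerivAt (fun x => ∫ w in x..1, expKernel θ w * Q w) (-(expKernel θ s * Q s)) s := by
    refine intervalIntegral.integral_hasDerivAt_left ?_ ?_
      ((continuousAt_expKernel hθ.ne' hs.2.ne).mul hQ)
    · rw [intervalIntegrable_iff_integrableOn_Ioo_of_le hs.2.le]
      exact hint.mono_set (Ioo_subset_Ioo_left hs.1.le)
    · exact AEStronglyMeasurable.stronglyMeasurableAtFilter_of_mem hint.aestronglyMeasurable
        (Ioo_mem_nhds hs.1 hs.2)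
  have hderiv := (((hasDerivAt_exp_one_div_mul_one_sub hθ.ne' hs.2.ne).const_mul θ⁻¹).mul
    hG).congr_of_eventuallyEq hφ
  rw [hφ.self_of_nhds, hφ'.unique hderiv, expKernel, Real.exp_neg]
  field_simp
  ring

end Kernel

section Distribution

variable {c : ℕ → ℝ}

lemma summable_of_tsum_eq_one (h : ∑' n, c n = 1) : Summable c := by
  by_contra hc
  simp [tsum_eq_zero_of_not_summable hc] at h

lemma abs_le_one_of_tsum_eq_one (h0 : ∀ n, 0 ≤ c n) (h1 : ∑' n, c n = 1) (n : ℕ) :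
    |c n| ≤ 1 := by
  rw [abs_of_nonneg (h0 n), ← h1]
  exact (summable_of_tsum_eq_one h1).le_tsum n fun k _ => h0 k

lemma abs_pgf_le_one (h0 : ∀ n, 0 ≤ c n) (h1 : ∑' n, c n = 1) {w : ℝ} (hw : |w| ≤ 1) :
    |pgf c w| ≤ 1 := by
  refine tsum_of_norm_bounded (f := fun n => c n * w ^ n)
    (h1 ▸ (summable_of_tsum_eq_one h1).hasSum) fun n => ?_
  rw [Real.norm_eq_abs, abs_mul, abs_pow, abs_of_nonneg (h0 n)]
  exact mul_le_of_le_one_right (h0 n) (pow_le_one₀ (abs_nonneg w) hw)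

end Distribution

theorem stmt16_general (p : ℕ → ℝ) (hp0 : ∀ n, 0 ≤ p n) (hp1 : (∑' n : ℕ, p n) = 1)
    (α θ : ℝ) (hθ : 0 < θ)
    (qq : ℕ → ℝ) (hq0 : ∀ n, 0 ≤ qq n) (hq1 : (∑' n : ℕ, qq n) = 1)
    (hqmono : ∀ n : ℕ, ((n : ℝ) + 1) * qq (n + 1) ≤ ((n : ℝ) + α) * qq n)
    (hφ : ∀ s ∈ Set.Ico (0 : ℝ) 1,
      (∑' n : ℕ, p n * s ^ n)
        = θ⁻¹ * Real.exp (1 / (θ * (1 - s))) *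
            ∫ w in s..1, ((1 - w) ^ 2)⁻¹ * Real.exp (-(1 / (θ * (1 - w)))) *
              (∑' k : ℕ, qq k * w ^ k)) :
    ∀ n : ℕ, 0 ≤ qcoef θ p n ∧
      ((n : ℝ) + 1) * qcoef θ p (n + 1) ≤ ((n : ℝ) + α) * qcoef θ p n := by
  have hp := abs_le_one_of_tsum_eq_one hp0 hp1
  have hq := abs_le_one_of_tsum_eq_one hq0 hq1
  have hunit : ∀ s ∈ Ioo (0 : ℝ) 1, |s| < 1 := fun s hs => by rw [abs_of_pos hs.1]; exact hs.2
  have hQ : ∀ s ∈ Ioo (0 : ℝ) 1, pgf qq s = pgf p s - θ * (1 - s) ^ 2 * pgf (derivCoeff p) s := by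
    intro s hs
    refine eq_sub_mul_deriv_of_eq_integral hθ hs ?_ (hasDerivAt_pgf hp (hunit s hs))
      (integrableOn_expKernel_mul (M := 1) hθ ?_ ?_) (hasDerivAt_pgf hq (hunit s hs)).continuousAt
    · filter_upwards [Ioo_mem_nhds hs.1 hs.2] with x hx using hφ x (Ioo_subset_Ico_self hx)
    · exact fun w hw => (hasDerivAt_pgf hq (hunit w hw)).continuousAt.continuousWithinAt
    · exact fun w hw => abs_pgf_le_one hq0 hq1 (hunit w hw).le
  have hcoef : qq - qcoef θ p = 0 := eq_zero_of_forall_hasSum_mul_pow_zero one_pos fun s hs => by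
    have hsum := (hasSum_pgf hq (hunit s hs)).sub (hasSum_qcoef_mul_pow θ hp (hunit s hs))
    rw [← hQ s hs, sub_self] at hsum
    simpa [sub_mul] using hsum
  intro n
  rw [← congrFun (sub_eq_zero.1 hcoef) n, ← congrFun (sub_eq_zero.1 hcoef) (n + 1)]
  exact ⟨hq0 n, hqmono n⟩

/-- Proposition 4.3, (ii) ⇒ (iii): if the pgf `φ` of the pmf `{p_n}` has the
integral representation in terms of the pgf `Q` of an `α`-monotone distribution `{qq_n}`,
then `q_n ≥ 0` and `(n+α)q_n ≥ (n+1)q_{n+1}` for all `n`. -/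
theorem stmt16 (p : ℕ → ℝ) (hp0 : ∀ n, 0 ≤ p n) (hp1 : (∑' n : ℕ, p n) = 1)
    (α θ : ℝ) (hα : 0 < α) (hθ : 0 < θ)
    (qq : ℕ → ℝ) (hq0 : ∀ n, 0 ≤ qq n) (hq1 : (∑' n : ℕ, qq n) = 1)
    (hqmono : ∀ n : ℕ, ((n : ℝ) + 1) * qq (n + 1) ≤ ((n : ℝ) + α) * qq n)
    (hφ : ∀ s ∈ Set.Ico (0 : ℝ) 1,
      (∑' n : ℕ, p n * s ^ n)
        = θ⁻¹ * Real.exp (1 / (θ * (1 - s))) *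
            ∫ w in s..1, ((1 - w) ^ 2)⁻¹ * Real.exp (-(1 / (θ * (1 - w)))) *
              (∑' k : ℕ, qq k * w ^ k)) :
    ∀ n : ℕ, 0 ≤ qcoef θ p n ∧
      ((n : ℝ) + 1) * qcoef θ p (n + 1) ≤ ((n : ℝ) + α) * qcoef θ p n :=
  stmt16_general p hp0 hp1 α θ hθ qq hq0 hq1 hqmono hφ
end

section
/- Let {p_n} be a pmf on Z₊ and θ > 0, α > 0. Define q_n = (2θn+1)p_n - θ((n+1)p_{n+1} + (n-1)p_{n-1}) (p_{-1} = 0). If q_n ≥ 0 and (n+α)q_n ≥ (n+1)q_{n+1} for all n ≥ 0, then Σ_n q_n = 1, i.e., {q_n} is a pmf; in particular n(p_{n+1} - p_n) + p_{n+1} → 0 as n → ∞. -/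
open Filter

/-! With `d_n = n p_n - (n-1)p_{n-1}`, the partial sums telescope to
`Σ_{k≤n} q_k = Σ_{k≤n} p_k - θ d_{n+1}`. If some partial sum of `q` exceeded `1`, then (as the
partial sums increase) `n p_n` would eventually drop by a fixed amount at every step and turn
negative. Hence `q` is summable with sum `L ≤ 1` and `d_n → (1 - L)/θ`; by Cesàro,
`p_n = (n p_n)/n` tends to the same limit, which must be `0` since `p` is summable. -/

open Finset Topology

theorem not_eventually_add_le_of_nonneg {r : ℕ → ℝ} (hr : ∀ n, 0 ≤ r n) {δ : ℝ} (hδ : 0 < δ) :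
    ¬ ∀ᶠ n in atTop, r (n + 1) + δ ≤ r n := by
  intro h
  obtain ⟨N, hN⟩ := eventually_atTop.1 h
  have hdrop : ∀ k : ℕ, r (N + k) + k * δ ≤ r N := by
    intro k
    induction k with
    | zero => simp
    | succ k ih =>
      have := hN (N + k) (Nat.le_add_right N k)
      rw [← add_assoc]
      push_cast
      linarith
  obtain ⟨k, hk⟩ := exists_nat_gt (r N / δ)
  rw [div_lt_iff₀ hδ] at hk
  linarith [hdrop k, hr (N + k)]

theorem eq_zero_of_tendsto_sub_of_tendsto_div_natCast {r : ℕ → ℝ} {c : ℝ}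
    (hΔ : Tendsto (fun n ↦ r (n + 1) - r n) atTop (𝓝 c))
    (hr : Tendsto (fun n : ℕ ↦ r n / n) atTop (𝓝 0)) : c = 0 := by
  have hmean : ∀ n : ℕ, (n : ℝ)⁻¹ * ∑ i ∈ range n, (r (i + 1) - r i) = r n / n - r 0 / n := by
    intro n
    rw [sum_range_sub]
    ring
  have hc := hΔ.cesaro
  simp only [hmean] at hc
  simpa using tendsto_nhds_unique hc (hr.sub (tendsto_const_div_atTop_nhds_zero_nat (r 0)))

theorem sum_range_succ_qcoef (θ : ℝ) (p : ℕ → ℝ) (n : ℕ) :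
    ∑ k ∈ range (n + 1), qcoef θ p k =
      ∑ k ∈ range (n + 1), p k - θ * (((n : ℝ) + 1) * p (n + 1) - n * p n) := by
  induction n with
  | zero => simp [qcoef]
  | succ n ih =>
    rw [sum_range_succ, ih, sum_range_succ _ (n + 1)]
    simp only [qcoef, Nat.add_sub_cancel, if_neg n.succ_ne_zero]
    push_cast
    ring

theorem sum_range_qcoef_le_one {θ : ℝ} {p : ℕ → ℝ} (hθ : 0 < θ) (hp0 : ∀ n, 0 ≤ p n)
    (hp : HasSum p 1) (hq0 : ∀ n, 0 ≤ qcoef θ p n) (N : ℕ) :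
    ∑ k ∈ range N, qcoef θ p k ≤ 1 := by
  by_contra! hN
  refine not_eventually_add_le_of_nonneg (r := fun n ↦ n * p n)
    (fun n ↦ mul_nonneg n.cast_nonneg (hp0 n)) (div_pos (sub_pos.2 hN) hθ)
    (eventually_atTop.2 ⟨N, fun n hn ↦ ?_⟩)
  have hmono : ∑ k ∈ range N, qcoef θ p k ≤ ∑ k ∈ range (n + 1), qcoef θ p k :=
    sum_le_sum_of_subset_of_nonneg (range_subset_range.2 (by omega)) fun k _ _ ↦ hq0 k
  have hS : ∑ k ∈ range (n + 1), p k ≤ 1 := sum_le_hasSum _ (fun k _ ↦ hp0 k) hp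
  rw [sum_range_succ_qcoef] at hmono
  rw [← le_sub_iff_add_le', div_le_iff₀ hθ]
  push_cast
  linarith

theorem tendsto_succ_mul_sub_mul_of_hasSum_qcoef {θ s t : ℝ} {p : ℕ → ℝ} (hθ : θ ≠ 0) (hp : HasSum p s)
    (hq : HasSum (qcoef θ p) t) :
    Tendsto (fun n : ℕ ↦ ((n : ℝ) + 1) * p (n + 1) - n * p n) atTop (𝓝 ((s - t) / θ)) := by
  refine (((hp.tendsto_sum_nat.sub hq.tendsto_sum_nat).comp
    (tendsto_add_atTop_nat 1)).div_const θ).congr fun n ↦ ?_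
  simp only [Function.comp, sum_range_succ_qcoef]
  field_simp
  ring

theorem stmt17_general (p : ℕ → ℝ) (hp0 : ∀ n, 0 ≤ p n) (hp1 : (∑' n : ℕ, p n) = 1)
    (θ : ℝ) (hθ : 0 < θ)
    (hq0 : ∀ n : ℕ, 0 ≤ qcoef θ p n) :
    (∑' n : ℕ, qcoef θ p n) = 1 ∧
      Tendsto (fun n : ℕ => (n : ℝ) * (p (n + 1) - p n) + p (n + 1)) atTop (nhds 0) := by
  have hp_summable : Summable p := by
    by_contra h
    rw [tsum_eq_zero_of_not_summable h] at hp1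
    exact zero_ne_one hp1
  have hp : HasSum p 1 := hp1 ▸ hp_summable.hasSum
  have hq := (summable_of_sum_range_le hq0 (sum_range_qcoef_le_one hθ hp0 hp hq0)).hasSum
  have hflux := tendsto_succ_mul_sub_mul_of_hasSum_qcoef hθ.ne' hp hq
  have hlim : (1 - ∑' n, qcoef θ p n) / θ = 0 := by
    refine eq_zero_of_tendsto_sub_of_tendsto_div_natCast (r := fun n ↦ n * p n) ?_ ?_
    · simpa only [Nat.cast_succ] using hflux
    · refine hp_summable.tendsto_atTop_zero.congr' ?_
      filter_upwards [eventually_ne_atTop 0] with n hn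
      field_simp
  have hsum : ∑' n, qcoef θ p n = 1 :=
    (sub_eq_zero.1 ((div_eq_zero_iff.1 hlim).resolve_right hθ.ne')).symm
  refine ⟨hsum, ?_⟩
  rw [hsum, sub_self, zero_div] at hflux
  exact hflux.congr fun n ↦ by ring

/-- part of Proposition 4.3, (iii) ⇒ (ii): if `q_n ≥ 0` and
`(n+α)q_n ≥ (n+1)q_{n+1}` for all `n`, then `{q_n}` is a pmf (`Σ q_n = 1`); in particular
`n(p_{n+1} - p_n) + p_{n+1} → 0`. -/
theorem stmt17 (p : ℕ → ℝ) (hp0 : ∀ n, 0 ≤ p n) (hp1 : (∑' n : ℕ, p n) = 1)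
    (θ α : ℝ) (hθ : 0 < θ) (hα : 0 < α)
    (hq0 : ∀ n : ℕ, 0 ≤ qcoef θ p n)
    (hqmono : ∀ n : ℕ, ((n : ℝ) + 1) * qcoef θ p (n + 1) ≤ ((n : ℝ) + α) * qcoef θ p n) :
    (∑' n : ℕ, qcoef θ p n) = 1 ∧
      Tendsto (fun n : ℕ => (n : ℝ) * (p (n + 1) - p n) + p (n + 1)) atTop (nhds 0) :=
  stmt17_general p hp0 hp1 θ hθ hq0
end
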